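/- arXiv:2203.11488 — 5 statements merged into one kernel-verified Lean document; each statement's English description precedes it below -/
import Mathlib

section
/- Let q > 1 be a real number, and let α, β ∈ ℂ with αβ = q and α + β = c where c is real and |c| ≤ q + 1. Then for any w ∈ ℂ, the quantity |w - α|·|w - β| equals |1 - αw|·|1 - βw| multiplied by a factor which is > 1 if |w| < 1 and < 1 if |w| > 1. Equivalently: if |w| < 1 then |w - α|·|w - β| > |1 - αw|·|1 - βw|, and if |w| > 1 then |w - α|·|w - β| < |1 - αw|·|1 - βw|. -/
/-! Both products are norms of real quadratics: `‖w - α‖ ‖w - β‖ = ‖w² - c w + q‖` and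
`‖1 - α w‖ ‖1 - β w‖ = ‖q w² - c w + 1‖`. The difference of their squares factors as
`(1 - q) (‖w‖² - 1) ((1 + q) (‖w‖² + 1) - 2 c Re w)`, and since `|c| ≤ q + 1` the last factor is
at least `(1 + q) (‖w‖ - 1)²`, which is positive off the unit circle. -/

open Complex

lemma sq_norm_quadratic_sub_sq_norm_reversed (c q : ℝ) (w : ℂ) :
    ‖w ^ 2 - c * w + q‖ ^ 2 - ‖q * w ^ 2 - c * w + 1‖ ^ 2 =
      (1 - q) * (‖w‖ ^ 2 - 1) * ((1 + q) * (‖w‖ ^ 2 + 1) - 2 * c * w.re) := by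
  simp only [Complex.sq_norm]
  simp only [normSq_apply, add_re, add_im, sub_re, sub_im, mul_re, mul_im,
    ofReal_re, ofReal_im, one_re, one_im, pow_two]
  ring

lemma two_mul_mul_re_lt {c q : ℝ} (hq : 0 < 1 + q) (hc : |c| ≤ q + 1) {w : ℂ} (hw : ‖w‖ ≠ 1) :
    2 * c * w.re < (1 + q) * (‖w‖ ^ 2 + 1) := by
  have hcw : c * w.re ≤ (1 + q) * ‖w‖ :=
    calc c * w.re ≤ |c| * |w.re| := by rw [← abs_mul]; exact le_abs_self _
      _ ≤ (1 + q) * ‖w‖ := by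
        gcongr
        · linarith
        · exact abs_re_le_norm w
  have hsq : 0 < (‖w‖ - 1) ^ 2 := sq_pos_iff.2 (sub_ne_zero.2 hw)
  nlinarith [mul_pos hq hsq]

/-- Yoshida's lemma: for `q > 1` real, `α β : ℂ` with `αβ = q`, `α + β = c` real,
`|c| ≤ q + 1`, and any `w : ℂ`, we have `|w-α||w-β| > |1-αw||1-βw|` if `|w| < 1`
and `|w-α||w-β| < |1-αw||1-βw|` if `|w| > 1`. -/
theorem stmt0 (q : ℝ) (hq : 1 < q) (α β : ℂ) (c : ℝ)
    (hprod : α * β = (q : ℂ)) (hsum : α + β = (c : ℂ)) (hc : |c| ≤ q + 1) (w : ℂ) :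
    (‖w‖ < 1 →
      ‖1 - α * w‖ * ‖1 - β * w‖ <
        ‖w - α‖ * ‖w - β‖) ∧
    (1 < ‖w‖ →
      ‖w - α‖ * ‖w - β‖ <
        ‖1 - α * w‖ * ‖1 - β * w‖) := by
  have hleft : ‖w - α‖ * ‖w - β‖ = ‖w ^ 2 - c * w + q‖ := by
    rw [← norm_mul]; congr 1; linear_combination hprod - w * hsum
  have hright : ‖1 - α * w‖ * ‖1 - β * w‖ = ‖q * w ^ 2 - c * w + 1‖ := by
    rw [← norm_mul]; congr 1; linear_combination w ^ 2 * hprod - w * hsum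
  have hdiff := sq_norm_quadratic_sub_sq_norm_reversed c q w
  have hfactor := fun hw : ‖w‖ ≠ 1 => sub_pos.2 (two_mul_mul_re_lt (by linarith) hc hw)
  rw [hleft, hright, ← sq_lt_sq₀ (norm_nonneg _) (norm_nonneg _),
    ← sq_lt_sq₀ (norm_nonneg _) (norm_nonneg _)]
  constructor
  · intro hw
    have hsign : 0 < (1 - q) * (‖w‖ ^ 2 - 1) :=
      mul_pos_of_neg_of_neg (by linarith) (by nlinarith [norm_nonneg w])
    linarith [mul_pos hsign (hfactor hw.ne)]
  · intro hw
    have hsign : (1 - q) * (‖w‖ ^ 2 - 1) < 0 :=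
      mul_neg_of_neg_of_pos (by linarith) (by nlinarith)
    linarith [mul_neg_of_neg_of_pos hsign (hfactor hw.ne')]
end

section
/- Let Q be a real number with Q > 1 (think Q = q_{n_{m-1}}). Fix integers k ≥ 0 and ℓ ≥ 1, and define two formal power series in x: F₁(x) = (-Qx;Q)_k · ∑_{p=1}^{∞} [k+p choose k+1]_Q · (-x)^p/(Q^{ℓ+p} - 1) and F₂(x) = [k choose ℓ]_Q · (1+x)^{-1} - ∑_{s=0}^{k-ℓ} Q^{binom(s+1,2)+ℓs} [k choose ℓ+s]_Q x^s. Then F₂(x) = -((Q;Q)_{k+1} / ((Q;Q)_ℓ (Q;Q)_{k-ℓ})) · F₁(x), where [a choose b]_Q denotes the Q-binomial coefficient, equal to 0 if b < 0 or b > a, and (x;Q)_n is the Q-Pochhammer symbol. -/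
open Finset PowerSeries

/-- The `Q`-Pochhammer symbol `(x;Q)_n = ∏_{m=0}^{n-1} (1 - Q^m x)`. -/
noncomputable def qPoch (Q x : ℂ) (n : ℕ) : ℂ := ∏ m ∈ range n, (1 - Q ^ m * x)

/-- The `Q`-binomial coefficient `[a choose b]_Q`, equal to `0` when `b > a`. -/
noncomputable def qBinom (Q : ℂ) (a b : ℕ) : ℂ :=
  if b ≤ a then qPoch Q Q a / (qPoch Q Q b * qPoch Q Q (a - b)) else 0

/-!
Write `P` for the polynomial `∑ₛ q^(s(s+1)/2 + ℓs) [k choose ℓ+s]_q Xˢ` and `S` for the series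
in `F₁`, and put `W = [k choose ℓ]_q - (1 + X) P` and `T = (-X;q)_{k+1} S`. Both satisfy a
first-order `q`-difference equation `q^ℓ (1 + X) F(qX) - (1 + q^(k+1) X) F(X) = c X`: for `W` with
`c = (1 - q^(k+1)) [k choose ℓ]_q`, coefficientwise from the ratio of consecutive `q`-binomial
coefficients; for `T` with `c = -1`, since `q^ℓ S(qX) - S(X) = -X / (-X;q)_{k+2}` by the
`q`-binomial theorem. So `W + (1 - q^(k+1)) [k choose ℓ]_q T` solves the homogeneous equation,
whose only power series solution is `0` because no `q^(ℓ+n)` equals `1`. Dividing by `1 + X`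
gives the identity.
-/

theorem pow_ne_one_of_not_isOfFinOrder {M : Type*} [Monoid M] {x : M} (hx : ¬IsOfFinOrder x)
    {m : ℕ} (hm : m ≠ 0) : x ^ m ≠ 1 :=
  fun h ↦ hx (isOfFinOrder_iff_pow_eq_one.2 ⟨m, Nat.pos_of_ne_zero hm, h⟩)

section QBinom

variable {q : ℂ}

theorem one_sub_pow_ne_zero (hq : ¬IsOfFinOrder q) {m : ℕ} (hm : m ≠ 0) : 1 - q ^ m ≠ 0 :=
  sub_ne_zero.2 (pow_ne_one_of_not_isOfFinOrder hq hm).symm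

@[simp]
theorem qPoch_zero (Q x : ℂ) : qPoch Q x 0 = 1 :=
  prod_range_zero _

theorem qPoch_self_succ (q : ℂ) (n : ℕ) :
    qPoch q q (n + 1) = qPoch q q n * (1 - q ^ (n + 1)) := by
  rw [qPoch, prod_range_succ, ← qPoch, pow_succ]

theorem qPoch_self_ne_zero (hq : ¬IsOfFinOrder q) (n : ℕ) : qPoch q q n ≠ 0 :=
  prod_ne_zero_iff.2 fun m _ ↦ by
    simpa only [pow_succ] using one_sub_pow_ne_zero hq m.succ_ne_zero

theorem qBinom_of_lt {a b : ℕ} (h : a < b) : qBinom q a b = 0 :=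
  if_neg (Nat.not_le.2 h)

theorem qBinom_add_left (q : ℂ) (a b : ℕ) :
    qBinom q (a + b) a = qPoch q q (a + b) / (qPoch q q a * qPoch q q b) := by
  rw [qBinom, if_pos (Nat.le_add_right a b), Nat.add_sub_cancel_left]

theorem qBinom_symm_add (q : ℂ) (a b : ℕ) : qBinom q (a + b) a = qBinom q (a + b) b := by
  rw [qBinom_add_left, add_comm a b, qBinom_add_left, mul_comm]

theorem qBinom_self (hq : ¬IsOfFinOrder q) (a : ℕ) : qBinom q a a = 1 := by
  rw [qBinom, if_pos le_rfl, Nat.sub_self, qPoch_zero, mul_one, div_self (qPoch_self_ne_zero hq a)]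

theorem qBinom_zero_right (hq : ¬IsOfFinOrder q) (a : ℕ) : qBinom q a 0 = 1 := by
  simpa [qBinom_self hq] using qBinom_symm_add q 0 a

theorem qBinom_pascal (hq : ¬IsOfFinOrder q) (n p : ℕ) :
    qBinom q (n + p + 1) (p + 1) = qBinom q (n + p) (p + 1) + q ^ n * qBinom q (n + p) p := by
  rcases n with _ | n
  · rw [zero_add, qBinom_self hq, qBinom_of_lt p.lt_succ_self, qBinom_self hq]
    ring
  · rw [show n + 1 + p + 1 = (p + 1) + (n + 1) by ring, qBinom_add_left,
      show n + 1 + p = (p + 1) + n by ring, qBinom_add_left,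
      show p + 1 + n = p + (n + 1) by ring, qBinom_add_left,
      show p + 1 + (n + 1) = p + (n + 1) + 1 by ring, qPoch_self_succ q (p + (n + 1)),
      qPoch_self_succ q p, qPoch_self_succ q n]
    have := qPoch_self_ne_zero hq n
    have := qPoch_self_ne_zero hq p
    have := one_sub_pow_ne_zero hq (by omega : n + 1 ≠ 0)
    have := one_sub_pow_ne_zero hq (by omega : p + 1 ≠ 0)
    field_simp
    ring

theorem qBinom_succ_right_eq (hq : ¬IsOfFinOrder q) (k i : ℕ) :
    q ^ (i + 1) * (1 - q ^ (i + 1)) * qBinom q k (i + 1) =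
      (q ^ (i + 1) - q ^ (k + 1)) * qBinom q k i := by
  by_cases hik : i + 1 ≤ k
  · obtain ⟨n, rfl⟩ := Nat.exists_eq_add_of_le hik
    rw [qBinom_add_left, show i + 1 + n = i + (n + 1) by ring, qBinom_add_left,
      qPoch_self_succ q i, qPoch_self_succ q n]
    have := qPoch_self_ne_zero hq n
    have := qPoch_self_ne_zero hq i
    have := one_sub_pow_ne_zero hq (by omega : i + 1 ≠ 0)
    have := one_sub_pow_ne_zero hq (by omega : n + 1 ≠ 0)
    field_simp
    ring
  · rw [qBinom_of_lt (by omega)]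
    rcases Nat.lt_or_eq_of_le (Nat.lt_succ_iff.1 (Nat.lt_of_not_le hik)) with hk | rfl
    · rw [qBinom_of_lt hk]
      ring
    · ring

end QBinom

section QDifference

variable {R : Type*} [CommRing R]

theorem rescale_C (a b : R) : rescale a (C b) = C b := by
  ext n
  rcases n with _ | n <;> simp [coeff_rescale, coeff_C]

theorem constantCoeff_rescale (a : R) (f : R⟦X⟧) :
    constantCoeff (rescale a f) = constantCoeff f := by
  rw [← coeff_zero_eq_constantCoeff_apply, coeff_rescale, pow_zero, one_mul,
    coeff_zero_eq_constantCoeff_apply]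

theorem coeff_succ_one_add_C_mul_X_mul (c : R) (f : R⟦X⟧) (n : ℕ) :
    coeff (n + 1) ((1 + C c * X) * f) = coeff (n + 1) f + c * coeff n f := by
  rw [add_mul, one_mul, map_add, mul_assoc, coeff_C_mul, coeff_succ_X_mul]

theorem coeff_succ_one_add_X_mul (f : R⟦X⟧) (n : ℕ) :
    coeff (n + 1) ((1 + X) * f) = coeff (n + 1) f + coeff n f := by
  simpa using coeff_succ_one_add_C_mul_X_mul 1 f n

/-- `(-X; q)_n`. -/
noncomputable def qPochNegX (q : R) (n : ℕ) : R⟦X⟧ := ∏ m ∈ range n, (1 + C (q ^ m) * X)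

theorem qPochNegX_succ (q : R) (n : ℕ) :
    qPochNegX q (n + 1) = qPochNegX q n * (1 + C (q ^ n) * X) :=
  prod_range_succ _ _

theorem rescale_qPochNegX (q : R) (n : ℕ) :
    rescale q (qPochNegX q n) = ∏ m ∈ range n, (1 + C (q ^ (m + 1)) * X) := by
  rw [qPochNegX, map_prod]
  refine prod_congr rfl fun m _ ↦ ?_
  rw [map_add, map_one, map_mul, rescale_C, rescale_X, ← mul_assoc, ← map_mul, ← pow_succ]

theorem qPochNegX_succ' (q : R) (n : ℕ) :
    qPochNegX q (n + 1) = (1 + X) * rescale q (qPochNegX q n) := by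
  rw [rescale_qPochNegX, qPochNegX, prod_range_succ', pow_zero, map_one, one_mul, mul_comm]

noncomputable def qDifference (q a b : R) (F : R⟦X⟧) : R⟦X⟧ :=
  C a * ((1 + X) * rescale q F) - (1 + C b * X) * F

theorem qDifference_add_C_mul (q a b c : R) (F G : R⟦X⟧) :
    qDifference q a b (F + C c * G) = qDifference q a b F + C c * qDifference q a b G := by
  simp only [qDifference, map_add, map_mul, rescale_C]
  ring

theorem eq_zero_of_qDifference_eq_zero [IsDomain R] {q a b : R} (ha : ∀ n, a * q ^ n ≠ 1)
    {F : R⟦X⟧} (hF : qDifference q a b F = 0) : F = 0 := by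
  ext n
  rw [map_zero]
  induction n with
  | zero =>
    have h := congrArg constantCoeff hF
    simp only [qDifference, map_sub, map_mul, map_add, constantCoeff_C, constantCoeff_one,
      constantCoeff_X, constantCoeff_rescale, add_zero, one_mul, mul_zero, map_zero] at h
    rw [coeff_zero_eq_constantCoeff_apply]
    refine (mul_eq_zero.1 ?_).resolve_left (sub_ne_zero.2 (ha 0))
    linear_combination h
  | succ n ih =>
    have h := congrArg (coeff (n + 1)) hF
    simp only [qDifference, map_sub, coeff_C_mul, coeff_succ_one_add_X_mul,
      coeff_succ_one_add_C_mul_X_mul, coeff_rescale, ih, mul_zero, add_zero, map_zero] at h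
    refine (mul_eq_zero.1 ?_).resolve_left (sub_ne_zero.2 (ha (n + 1)))
    linear_combination h

end QDifference

section QSeries

variable {q : ℂ}

noncomputable def qBinomSeries (q : ℂ) (n : ℕ) : ℂ⟦X⟧ :=
  mk fun p ↦ (-1) ^ p * qBinom q (n + p) p

theorem one_add_X_mul_qBinomSeries_zero (hq : ¬IsOfFinOrder q) :
    (1 + X) * qBinomSeries q 0 = 1 := by
  ext (_ | N)
  · simp [qBinomSeries, qBinom_zero_right hq]
  · rw [coeff_succ_one_add_X_mul]
    simp [qBinomSeries, qBinom_self hq, coeff_one, pow_succ]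

theorem one_add_C_mul_X_mul_qBinomSeries_succ (hq : ¬IsOfFinOrder q) (n : ℕ) :
    (1 + C (q ^ (n + 1)) * X) * qBinomSeries q (n + 1) = qBinomSeries q n := by
  ext (_ | N)
  · simp [qBinomSeries, qBinom_zero_right hq]
  · rw [coeff_succ_one_add_C_mul_X_mul]
    simp only [qBinomSeries, coeff_mk]
    rw [show n + 1 + (N + 1) = n + 1 + N + 1 by ring, qBinom_pascal hq,
      show n + (N + 1) = n + 1 + N by ring]
    ring

/-- The `q`-binomial theorem for `1 / (-X; q)_{n+1}`. -/
theorem qPochNegX_mul_qBinomSeries (hq : ¬IsOfFinOrder q) (n : ℕ) :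
    qPochNegX q (n + 1) * qBinomSeries q n = 1 := by
  induction n with
  | zero => rw [qPochNegX_succ, qPochNegX, prod_range_zero, one_mul, pow_zero, map_one, one_mul,
      one_add_X_mul_qBinomSeries_zero hq]
  | succ n ih => rw [qPochNegX_succ, mul_assoc, one_add_C_mul_X_mul_qBinomSeries_succ hq, ih]

noncomputable def qBinomDivSeries (q : ℂ) (k l : ℕ) : ℂ⟦X⟧ := mk fun p ↦
  if p = 0 then 0 else (-1) ^ p * qBinom q (k + p) (k + 1) / (q ^ (l + p) - 1)

theorem C_mul_rescale_qBinomDivSeries (hq : ¬IsOfFinOrder q) (k l : ℕ) :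
    C (q ^ l) * rescale q (qBinomDivSeries q k l) =
      qBinomDivSeries q k l - X * qBinomSeries q (k + 1) := by
  ext (_ | N)
  · simp [qBinomDivSeries, constantCoeff_rescale]
  · simp only [qBinomDivSeries, qBinomSeries, map_sub, coeff_C_mul, coeff_rescale, coeff_mk,
      coeff_succ_X_mul, if_neg N.succ_ne_zero]
    rw [show k + (N + 1) = k + 1 + N by ring, qBinom_symm_add]
    have := sub_ne_zero.2 (pow_ne_one_of_not_isOfFinOrder hq (by omega : l + (N + 1) ≠ 0))
    field_simp
    ring

theorem qDifference_qPochNegX_mul_qBinomDivSeries (hq : ¬IsOfFinOrder q) (k l : ℕ) :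
    qDifference q (q ^ l) (q ^ (k + 1)) (qPochNegX q (k + 1) * qBinomDivSeries q k l) = -X := by
  rw [qDifference, map_mul]
  linear_combination
    ((1 + X) * rescale q (qPochNegX q (k + 1))) * C_mul_rescale_qBinomDivSeries hq k l
      + (qBinomDivSeries q k l - X * qBinomSeries q (k + 1)) * (qPochNegX_succ' q (k + 1)).symm
      + qBinomDivSeries q k l * qPochNegX_succ q (k + 1)
      - X * qPochNegX_mul_qBinomSeries hq (k + 1)

noncomputable def qBinomTailSeries (q : ℂ) (k l : ℕ) : ℂ⟦X⟧ := mk fun s ↦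
  q ^ (s * (s + 1) / 2 + l * s) * qBinom q k (l + s)

theorem sum_range_eq_qBinomTailSeries (q : ℂ) (k l : ℕ) :
    ∑ s ∈ range (k - l + 1), C (q ^ (s * (s + 1) / 2 + l * s) * qBinom q k (l + s)) * X ^ s =
      qBinomTailSeries q k l := by
  ext N
  simp only [qBinomTailSeries, coeff_mk, map_sum, coeff_C_mul_X_pow]
  rw [sum_ite_eq, ite_eq_left_iff, mem_range]
  intro hN
  rw [qBinom_of_lt (by omega), mul_zero]

theorem qBinomTailSeries_rescale_eq (hq : ¬IsOfFinOrder q) (k l : ℕ) :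
    C (q ^ l) * ((1 + C q * X) * rescale q (qBinomTailSeries q k l)) -
        (1 + C (q ^ (k + 1)) * X) * qBinomTailSeries q k l =
      C ((q ^ l - 1) * qBinom q k l) := by
  ext (_ | N)
  · simp [qBinomTailSeries, constantCoeff_rescale, sub_mul]
  · simp only [map_sub, coeff_C_mul, coeff_succ_one_add_C_mul_X_mul, coeff_rescale,
      qBinomTailSeries, coeff_mk, coeff_C, if_neg N.succ_ne_zero]
    have htri : (N + 1) * (N + 1 + 1) / 2 = N * (N + 1) / 2 + (N + 1) := by
      rw [show (N + 1) * (N + 1 + 1) = N * (N + 1) + (N + 1) * 2 by ring,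
        Nat.add_mul_div_right _ _ two_pos]
    rw [htri, show l + (N + 1) = l + N + 1 by ring]
    linear_combination -q ^ (N * (N + 1) / 2 + l * N) * qBinom_succ_right_eq hq k (l + N)

theorem qDifference_qBinom_sub_one_add_X_mul_qBinomTailSeries (hq : ¬IsOfFinOrder q) (k l : ℕ) :
    qDifference q (q ^ l) (q ^ (k + 1)) (C (qBinom q k l) - (1 + X) * qBinomTailSeries q k l) =
      C ((1 - q ^ (k + 1)) * qBinom q k l) * X := by
  have h := qBinomTailSeries_rescale_eq hq k l
  simp only [qDifference, map_sub, rescale_C, map_mul, map_add, map_one, rescale_X] at h ⊢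
  linear_combination (-(1 + X)) * h

theorem qBinom_sub_one_add_X_mul_qBinomTailSeries (hq : ¬IsOfFinOrder q) (k : ℕ) {l : ℕ}
    (hl : l ≠ 0) :
    C (qBinom q k l) - (1 + X) * qBinomTailSeries q k l =
      -C ((1 - q ^ (k + 1)) * qBinom q k l) * (qPochNegX q (k + 1) * qBinomDivSeries q k l) := by
  have hql : ∀ n, q ^ l * q ^ n ≠ 1 := fun n ↦ by
    rw [← pow_add]
    exact pow_ne_one_of_not_isOfFinOrder hq (by omega)
  rw [neg_mul]
  refine eq_neg_of_add_eq_zero_left (eq_zero_of_qDifference_eq_zero (b := q ^ (k + 1)) hql ?_)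
  rw [qDifference_add_C_mul, qDifference_qBinom_sub_one_add_X_mul_qBinomTailSeries hq,
    qDifference_qPochNegX_mul_qBinomDivSeries hq]
  ring

end QSeries

theorem one_sub_pow_mul_qBinom (q : ℂ) (k l : ℕ) :
    (1 - q ^ (k + 1)) * qBinom q k l =
      if l ≤ k then qPoch q q (k + 1) / (qPoch q q l * qPoch q q (k - l)) else 0 := by
  rw [qBinom]
  split_ifs
  · rw [qPoch_self_succ]
    ring
  · ring

/-- The key `q`-series lemma (eq102): with
`F₁(x) = (-Qx;Q)_k ∑_{p≥1} [k+p choose k+1]_Q (-x)^p/(Q^{ℓ+p}-1)` and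
`F₂(x) = [k choose ℓ]_Q (1+x)⁻¹ - ∑_{s=0}^{k-ℓ} Q^{C(s+1,2)+ℓs} [k choose ℓ+s]_Q x^s`,
one has `F₂ = -((Q;Q)_{k+1}/((Q;Q)_ℓ (Q;Q)_{k-ℓ})) F₁` (where the coefficient is read
as `0` if `ℓ > k`). -/
theorem stmt5 (Q : ℝ) (hQ : 1 < Q) (k ℓ : ℕ) (hℓ : 1 ≤ ℓ) :
    (PowerSeries.C (R := ℂ) (qBinom (Q : ℂ) k ℓ) * (1 + PowerSeries.X : PowerSeries ℂ)⁻¹ -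
        ∑ s ∈ range (k - ℓ + 1),
          PowerSeries.C (R := ℂ) ((Q : ℂ) ^ (s * (s + 1) / 2 + ℓ * s) * qBinom (Q : ℂ) k (ℓ + s)) *
            PowerSeries.X ^ s) =
      - PowerSeries.C (R := ℂ)
          (if ℓ ≤ k then
            qPoch (Q : ℂ) (Q : ℂ) (k + 1) /
              (qPoch (Q : ℂ) (Q : ℂ) ℓ * qPoch (Q : ℂ) (Q : ℂ) (k - ℓ))
          else 0) *
        ((∏ m ∈ range k, (1 + PowerSeries.C (R := ℂ) ((Q : ℂ) ^ (m + 1)) * PowerSeries.X)) *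
          PowerSeries.mk fun p =>
            if p = 0 then 0
            else (-1) ^ p * qBinom (Q : ℂ) (k + p) (k + 1) / ((Q : ℂ) ^ (ℓ + p) - 1)) := by
  set q : ℂ := (Q : ℂ)
  have hq : ¬IsOfFinOrder q := fun h ↦ by
    have := h.norm_eq_one
    rw [Complex.norm_real, Real.norm_of_nonneg (by linarith)] at this
    linarith
  have key := qBinom_sub_one_add_X_mul_qBinomTailSeries hq k (Nat.one_le_iff_ne_zero.1 hℓ)
  rw [qPochNegX_succ'] at key
  have hinv : (1 + X : ℂ⟦X⟧) * (1 + X)⁻¹ = 1 := PowerSeries.mul_inv_cancel _ (by simp)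
  rw [sum_range_eq_qBinomTailSeries, ← one_sub_pow_mul_qBinom, ← rescale_qPochNegX,
    ← qBinomDivSeries.eq_1]
  linear_combination (1 + X)⁻¹ * key + (qBinomTailSeries q k ℓ - C ((1 - q ^ (k + 1)) *
    qBinom q k ℓ) * (rescale q (qPochNegX q k) * qBinomDivSeries q k ℓ)) * hinv
end

section
/- Let Q > 1 be real and k, ℓ integers with k ≥ 0, ℓ ≥ 1. Suppose F(x) ∈ ℂ[[x]] is a formal power series satisfying (1 + Qx) Q^ℓ F(Qx) = (1 + Q^{k+1} x) F(x) (as formal power series, where F(Qx) denotes substitution of Qx for x). Then F = 0. -/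
/-!
Comparing coefficients of `xⁿ⁺¹` in `(1 + qx) d F(qx) = (1 + cx) F(x)` gives
`d qⁿ⁺¹ (fₙ₊₁ + fₙ) = fₙ₊₁ + c fₙ`, and the constant terms give `d f₀ = f₀`. Hence if no
`d qⁿ` equals `1`, induction on `n` shows that every coefficient `fₙ` vanishes. For `q = Q > 1`
and `d = Q^ℓ` with `ℓ ≥ 1` these numbers are real and `> 1`.
-/

open PowerSeries

namespace PowerSeries

section CommRing

variable {R : Type*} [CommRing R]

theorem coeff_zero_one_add_C_mul_X_mul (a : R) (F : R⟦X⟧) :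
    coeff 0 ((1 + C a * X) * F) = coeff 0 F := by
  simp

theorem coeff_succ_one_add_C_mul_X_mul (a : R) (F : R⟦X⟧) (n : ℕ) :
    coeff (n + 1) ((1 + C a * X) * F) = coeff (n + 1) F + a * coeff n F := by
  rw [add_mul, one_mul, mul_assoc, map_add, coeff_C_mul, coeff_succ_X_mul]

end CommRing

theorem eq_zero_of_one_add_C_mul_X_mul_rescale_eq {K : Type*} [Field K] (q c d : K)
    (hq : ∀ n : ℕ, d * q ^ n ≠ 1) (F : K⟦X⟧)
    (h : (1 + C q * X) * C d * rescale q F = (1 + C c * X) * F) :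
    F = 0 := by
  rw [mul_comm _ (C d), mul_assoc] at h
  ext n
  rw [map_zero]
  induction n with
  | zero =>
    have h0 := congrArg (coeff 0) h
    rw [coeff_C_mul, coeff_zero_one_add_C_mul_X_mul, coeff_zero_one_add_C_mul_X_mul,
      coeff_rescale, pow_zero, one_mul] at h0
    exact (mul_left_eq_self₀.mp h0).resolve_left (by simpa using hq 0)
  | succ n ih =>
    have hn := congrArg (coeff (n + 1)) h
    rw [coeff_C_mul, coeff_succ_one_add_C_mul_X_mul, coeff_succ_one_add_C_mul_X_mul,
      coeff_rescale, coeff_rescale, ih] at hn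
    have hfix : d * q ^ (n + 1) * coeff (n + 1) F = coeff (n + 1) F := by
      linear_combination hn
    exact (mul_left_eq_self₀.mp hfix).resolve_left (hq (n + 1))

end PowerSeries

/-- Uniqueness lemma: if `F ∈ ℂ[[x]]` satisfies
`(1 + Qx) Q^ℓ F(Qx) = (1 + Q^{k+1} x) F(x)` with `Q > 1` real and `ℓ ≥ 1`, then `F = 0`. -/
theorem stmt6 (Q : ℝ) (hQ : 1 < Q) (k ℓ : ℕ) (hℓ : 1 ≤ ℓ) (F : PowerSeries ℂ)
    (h : (1 + PowerSeries.C (Q : ℂ) * PowerSeries.X) * PowerSeries.C ((Q : ℂ) ^ ℓ) *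
          PowerSeries.rescale (Q : ℂ) F =
        (1 + PowerSeries.C ((Q : ℂ) ^ (k + 1)) * PowerSeries.X) * F) :
    F = 0 := by
  refine eq_zero_of_one_add_C_mul_X_mul_rescale_eq _ _ _ (fun n hn => ?_) F h
  have hreal : Q ^ (ℓ + n) = 1 := by
    rw [pow_add]
    exact_mod_cast hn
  exact (one_lt_pow₀ hQ (by omega)).ne' hreal
end

section
/- Let q > 1 be real and a ∈ ℂ with α, β the two roots of X² - aX + q. Then |α| = |β| = √q if and only if a is real and |a| ≤ 2√q. -/
/-! Both sides are equivalent to `β = conj α`. For the left side, `α · conj α = ‖α‖² = q = α β`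
cancels to it. For the right side, `α + β = a` is real and `(α - β)² = a² - 4q ≤ 0` forces
`α - β` to be purely imaginary. -/

open ComplexConjugate

namespace Complex

theorem re_eq_zero_of_sq_eq_ofReal_nonpos {z : ℂ} {r : ℝ} (hz : z ^ 2 = r) (hr : r ≤ 0) :
    z.re = 0 := by
  have hre : z.re ^ 2 - z.im ^ 2 = r := by simpa [sq] using congrArg re hz
  have him : z.re * z.im = 0 := by
    have := congrArg im hz
    simp only [sq, mul_im, ofReal_im] at this
    linarith
  have : z.re ^ 4 ≤ 0 := by nlinarith [sq_nonneg z.re]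
  exact pow_eq_zero_iff (n := 4) (by norm_num) |>.mp (le_antisymm this (by positivity))

theorem norm_eq_sqrt_iff_mul_conj_eq {q : ℝ} (hq : 0 ≤ q) (α : ℂ) :
    ‖α‖ = √q ↔ α * conj α = q := by
  rw [mul_conj, ofReal_inj, ← Complex.sq_norm, eq_comm, Real.sqrt_eq_iff_eq_sq hq (norm_nonneg α),
    eq_comm]

theorem norm_eq_sqrt_and_norm_eq_sqrt_iff_eq_conj {q : ℝ} (hq : 0 < q) {α β : ℂ}
    (hprod : α * β = q) : (‖α‖ = √q ∧ ‖β‖ = √q) ↔ β = conj α := by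
  have hα : α ≠ 0 := left_ne_zero_of_mul (hprod ▸ ofReal_ne_zero.mpr hq.ne')
  constructor
  · rintro ⟨hnorm, -⟩
    rw [norm_eq_sqrt_iff_mul_conj_eq hq.le] at hnorm
    exact mul_left_cancel₀ hα (hprod.trans hnorm.symm)
  · rintro rfl
    rw [norm_conj, and_self, norm_eq_sqrt_iff_mul_conj_eq hq.le, hprod]

theorem eq_conj_iff_im_add_eq_zero_and_norm_add_le {q : ℝ} (hq : 0 ≤ q) {α β : ℂ}
    (hprod : α * β = q) : β = conj α ↔ ((α + β).im = 0 ∧ ‖α + β‖ ≤ 2 * √q) := by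
  constructor
  · rintro rfl
    have hnorm : ‖α‖ = √q := (norm_eq_sqrt_iff_mul_conj_eq hq α).mpr hprod
    refine ⟨by simp, ?_⟩
    rw [add_conj, norm_real, Real.norm_eq_abs, abs_mul, abs_two, ← hnorm]
    exact mul_le_mul_of_nonneg_left (abs_re_le_norm α) zero_le_two
  · rintro ⟨him, hle⟩
    set a := (α + β).re
    have hsum : α + β = a := ext rfl him
    have ha : a ^ 2 ≤ 4 * q := by
      rw [hsum, norm_real, Real.norm_eq_abs] at hle
      calc a ^ 2 = |a| ^ 2 := (sq_abs a).symm
        _ ≤ (2 * √q) ^ 2 := pow_le_pow_left₀ (abs_nonneg a) hle 2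
        _ = 4 * q := by rw [mul_pow, Real.sq_sqrt hq]; norm_num
    have hdisc : (α - β) ^ 2 = ((a ^ 2 - 4 * q : ℝ) : ℂ) := by
      push_cast
      linear_combination (α + β + a) * hsum - 4 * hprod
    have hre : (α - β).re = 0 := re_eq_zero_of_sq_eq_ofReal_nonpos hdisc (by linarith)
    apply ext
    · rw [sub_re] at hre
      rw [conj_re]
      linarith
    · rw [add_im] at him
      rw [conj_im]
      linarith

end Complex

/-- For `q > 1` real and `α, β` the two roots of `X² - aX + q` (i.e. `αβ = q`,
`α + β = a`), both roots have absolute value `√q` iff `a` is real with `|a| ≤ 2√q`. -/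
theorem stmt9 (q : ℝ) (hq : 1 < q) (a α β : ℂ)
    (hprod : α * β = (q : ℂ)) (hsum : α + β = a) :
    (‖α‖ = Real.sqrt q ∧ ‖β‖ = Real.sqrt q) ↔
      (a.im = 0 ∧ ‖a‖ ≤ 2 * Real.sqrt q) := by
  have hq₀ : 0 < q := zero_lt_one.trans hq
  rw [Complex.norm_eq_sqrt_and_norm_eq_sqrt_iff_eq_conj hq₀ hprod,
    Complex.eq_conj_iff_im_add_eq_zero_and_norm_add_le hq₀.le hprod, hsum]
end

section
/- Let Q > 1 be real and k ≥ 0 an integer. Define v_ℓ for 1 ≤ ℓ ≤ k by v_ℓ = (-1)^{ℓ+1} Q^{binom(ℓ,2) - kℓ} · (Q;Q)_{ℓ+k} / ((Q;Q)_ℓ (Q;Q)_{ℓ-1} (Q;Q)_{k-ℓ}) and v_ℓ = 0 for ℓ > k, where (Q;Q)_n = ∏_{j=1}^n (1 - Q^j). Define rational functions B_ℓ(x) = 0 for ℓ > k and, for 1 ≤ ℓ ≤ k, B_ℓ(x) = (-1)^{ℓ-1} · ((Q;Q)_{ℓ+k}/((Q;Q)_k (Q;Q)_{ℓ-1})) ·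 x^ℓ Y_ℓ(x)/D(x), where D(x) = ∏_{j=1}^k (Q^j - x) and Y_ℓ(x) = ∑_{r=0}^{k-ℓ} Q^{binom(r+1,2)+binom(k-ℓ-r+1,2)} [k choose r]_Q [k choose k-ℓ-r]_Q x^r. Then ∑_{ℓ=1}^{∞} B_ℓ(x) = -1 + ∏_{j=1}^k (1 - Q^j x)/(1 - Q^{-j} x) as rational functions in x. -/
open Finset

/-- The `Q`-Pochhammer value `(Q;Q)_n = ∏_{j=1}^{n} (1 - Q^j)`. -/
noncomputable def qP (Q : ℝ) (n : ℕ) : ℝ := ∏ j ∈ Finset.Icc 1 n, (1 - Q ^ j)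

/-- The `Q`-binomial coefficient `[a choose b]_Q`, `0` when `b > a`. -/
noncomputable def qB (Q : ℝ) (a b : ℕ) : ℝ :=
  if b ≤ a then qP Q a / (qP Q b * qP Q (a - b)) else 0

/-- `Y_k^ℓ(x) = ∑_{r=0}^{k-ℓ} Q^{C(r+1,2)+C(k-ℓ-r+1,2)} [k choose r]_Q [k choose k-ℓ-r]_Q x^r`. -/
noncomputable def Ypoly (Q : ℝ) (k ℓ : ℕ) (x : ℝ) : ℝ :=
  ∑ r ∈ range (k - ℓ + 1),
    Q ^ (r * (r + 1) / 2 + (k - ℓ - r) * (k - ℓ - r + 1) / 2) * qB Q k r * qB Q k (k - ℓ - r) * x ^ r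

/-- `D_k(x) = ∏_{j=1}^k (Q^j - x)`. -/
noncomputable def Dpoly (Q : ℝ) (k : ℕ) (x : ℝ) : ℝ := ∏ j ∈ Finset.Icc 1 k, (Q ^ j - x)

/-- `B_ℓ(x)`, the explicit rational function, `0` for `ℓ > k`. -/
noncomputable def Bfun (Q : ℝ) (k ℓ : ℕ) (x : ℝ) : ℝ :=
  if ℓ ≤ k then
    (-1) ^ (ℓ - 1) * (qP Q (ℓ + k) / (qP Q k * qP Q (ℓ - 1))) * x ^ ℓ * Ypoly Q k ℓ x / Dpoly Q k x
  else 0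

/-!
Clearing the denominator `D(x) = E(-x)`, where `E(u) = ∏_{j=1}^k (u + Q^j)`, and reversing the order
of the numerator factors, the identity becomes `∑_ℓ (-1)^{ℓ-1} c_ℓ x^ℓ Y_ℓ(x) = E(-Q^{k+1} x) - E(-x)`
with `c_ℓ = (1 - Q^ℓ) [k+ℓ choose k]_Q`. By the `q`-binomial theorem
`S(y) = ∏_{j=1}^k (1 + Q^j y) = ∑_t Q^{binom(t+1,2)} [k choose t]_Q y^t`, so `Y_ℓ(x)` is the coefficient of
`y^{k-ℓ}` in `S(xy) S(y)` and the left side is the coefficient of `y^k` in `G(xy) S(xy) S(y)`, where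
`G(y) = ∑_ℓ (-1)^{ℓ-1} c_ℓ y^ℓ`. Since `∑_ℓ (-c)^ℓ [k+ℓ choose k]_Q y^ℓ` inverts `∏_{j=0}^k (1 + c Q^j y)`,
the choices `c = Q` and `c = 1` give `G(y) S(y) = 1/(1 + Q^{k+1} y) - 1/(1 + y)`, and the coefficient of
`y^k` in `S(y)/(1 + u y)` is `E(-u)`.
-/

lemma prod_Icc_succ_eq_mul_prod {M : Type*} [CommMonoid M] (f : ℕ → M) (n : ℕ) :
    ∏ j ∈ Icc 1 (n + 1), f j = f 1 * ∏ j ∈ Icc 1 n, f (j + 1) := by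
  induction n with
  | zero => simp
  | succ n ih => rw [prod_Icc_succ_top (by omega), ih, prod_Icc_succ_top (by omega), mul_assoc]

lemma prod_Icc_reflect {M : Type*} [CommMonoid M] (f : ℕ → M) (k : ℕ) :
    ∏ j ∈ Icc 1 k, f (k + 1 - j) = ∏ j ∈ Icc 1 k, f j :=
  prod_nbij' (fun j => k + 1 - j) (fun j => k + 1 - j) (by intro j; simp; omega)
    (by intro j; simp; omega) (by intro j; simp; omega) (by intro j; simp; omega) (by simp)

lemma triangle_succ (t : ℕ) : (t + 1) * (t + 1 + 1) / 2 = t * (t + 1) / 2 + (t + 1) := by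
  rw [show (t + 1) * (t + 1 + 1) = t * (t + 1) + (t + 1) * 2 by ring,
    Nat.add_mul_div_right _ _ two_pos]

section GeometricSeries

open PowerSeries

variable {R : Type*} [CommRing R]

lemma mk_pow_mul_one_add_smul_X (c : R) : (PowerSeries.mk fun n => (-c) ^ n) * (1 + c • X) = 1 := by
  simpa [rescale_mk, smul_eq_C_mul, sub_eq_add_neg] using
    congrArg (rescale (-c)) (mk_one_mul_one_sub_eq_one R)

lemma eq_mk_pow_of_mul_one_add_smul_X {f : R⟦X⟧} {c : R} (h : f * (1 + c • X) = 1) :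
    f = PowerSeries.mk fun n => (-c) ^ n :=
  calc f = f * ((1 + c • X) * PowerSeries.mk fun n => (-c) ^ n) := by
        rw [mul_comm (1 + c • X), mk_pow_mul_one_add_smul_X, mul_one]
    _ = _ := by rw [← mul_assoc, h, one_mul]

end GeometricSeries

section

variable {Q : ℝ}

lemma qP_zero (Q : ℝ) : qP Q 0 = 1 := by simp [qP]

lemma qP_succ (Q : ℝ) (n : ℕ) : qP Q (n + 1) = qP Q n * (1 - Q ^ (n + 1)) :=
  prod_Icc_succ_top (by omega) _

lemma one_sub_pow_ne_zero_s16 (hQ : 1 < Q) {j : ℕ} (hj : j ≠ 0) : 1 - Q ^ j ≠ 0 :=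
  sub_ne_zero.mpr (one_lt_pow₀ hQ hj).ne

lemma qP_ne_zero (hQ : 1 < Q) (n : ℕ) : qP Q n ≠ 0 :=
  prod_ne_zero_iff.mpr fun _ hj => one_sub_pow_ne_zero_s16 hQ (by simp at hj; omega)

lemma qB_of_lt (Q : ℝ) {a b : ℕ} (h : a < b) : qB Q a b = 0 := if_neg (by omega)

lemma qB_of_le (Q : ℝ) {a b : ℕ} (h : b ≤ a) : qB Q a b = qP Q a / (qP Q b * qP Q (a - b)) :=
  if_pos h

lemma qB_zero_right (hQ : 1 < Q) (n : ℕ) : qB Q n 0 = 1 := by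
  rw [qB_of_le Q n.zero_le, Nat.sub_zero, qP_zero, one_mul, div_self (qP_ne_zero hQ n)]

lemma qB_self (hQ : 1 < Q) (n : ℕ) : qB Q n n = 1 := by
  rw [qB_of_le Q le_rfl, Nat.sub_self, qP_zero, mul_one, div_self (qP_ne_zero hQ n)]

lemma qB_succ_succ (hQ : 1 < Q) (n t : ℕ) :
    qB Q (n + 1) (t + 1) = qB Q n t + Q ^ (t + 1) * qB Q n (t + 1) := by
  rcases lt_trichotomy t n with h | rfl | h
  · obtain ⟨s, rfl⟩ := Nat.exists_eq_add_of_lt h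
    rw [qB_of_le Q (by omega), qB_of_le Q (by omega), qB_of_le Q (by omega),
      show t + s + 1 + 1 - (t + 1) = s + 1 by omega, show t + s + 1 - t = s + 1 by omega,
      show t + s + 1 - (t + 1) = s by omega, qP_succ Q (t + s + 1), qP_succ Q t, qP_succ Q s]
    have := qP_ne_zero hQ (t + s + 1)
    have := qP_ne_zero hQ t
    have := qP_ne_zero hQ s
    have := one_sub_pow_ne_zero_s16 hQ (j := t + s + 1 + 1) (by omega)
    have := one_sub_pow_ne_zero_s16 hQ (j := t + 1) (by omega)
    have := one_sub_pow_ne_zero_s16 hQ (j := s + 1) (by omega)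
    field_simp
    ring
  · rw [qB_self hQ, qB_self hQ, qB_of_lt Q (Nat.lt_succ_self t)]
    ring
  · rw [qB_of_lt Q (by omega), qB_of_lt Q h, qB_of_lt Q (by omega)]
    ring

lemma qP_div_eq_mul_qB (hQ : 1 < Q) (k ℓ : ℕ) :
    qP Q (ℓ + 1 + k) / (qP Q k * qP Q ℓ) = (1 - Q ^ (ℓ + 1)) * qB Q (k + (ℓ + 1)) k := by
  rw [qB_of_le Q (by omega), show k + (ℓ + 1) - k = ℓ + 1 by omega, qP_succ Q ℓ,
    show ℓ + 1 + k = k + (ℓ + 1) by omega]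
  have := qP_ne_zero hQ k
  have := qP_ne_zero hQ ℓ
  have := one_sub_pow_ne_zero_s16 hQ (j := ℓ + 1) (by omega)
  field_simp

theorem prod_add_pow_smul_eq_sum {A : Type*} [CommRing A] [Algebra ℝ A] (hQ : 1 < Q) (u v : A)
    (n : ℕ) :
    ∏ j ∈ Icc 1 n, (u + Q ^ j • v) =
      ∑ p ∈ antidiagonal n, (Q ^ (p.1 * (p.1 + 1) / 2) * qB Q n p.1) • (v ^ p.1 * u ^ p.2) := by
  induction n generalizing v with
  | zero => simp [qB_zero_right hQ]
  | succ n ih =>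
    set F : ℕ × ℕ → A := fun p => (Q ^ p.1 * (Q ^ (p.1 * (p.1 + 1) / 2) * qB Q n p.1)) •
      (v ^ p.1 * u ^ p.2) with hF
    have hshift : ∏ j ∈ Icc 1 (n + 1), (u + Q ^ j • v) =
        (u + Q • v) * ∏ j ∈ Icc 1 n, (u + Q ^ j • Q • v) := by
      rw [prod_Icc_succ_eq_mul_prod, pow_one]
      simp only [pow_succ, mul_smul]
    have hlow : ∑ p ∈ antidiagonal n, F (p.1, p.2 + 1) =
        F (0, n + 1) + ∑ p ∈ antidiagonal n, F (p.1 + 1, p.2) := by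
      have htop : F (n + 1, 0) = 0 := by simp [hF, qB_of_lt Q (Nat.lt_succ_self n)]
      have h := Nat.sum_antidiagonal_succ' (f := F) (n := n)
      rw [htop, zero_add] at h
      rw [← h, Nat.sum_antidiagonal_succ]
    rw [hshift, ih, mul_sum, Nat.sum_antidiagonal_succ]
    have hterm : ∀ p ∈ antidiagonal n,
        (u + Q • v) * ((Q ^ (p.1 * (p.1 + 1) / 2) * qB Q n p.1) • ((Q • v) ^ p.1 * u ^ p.2)) =
          F (p.1, p.2 + 1) + (Q ^ (p.1 + 1) * (Q ^ (p.1 * (p.1 + 1) / 2) * qB Q n p.1)) •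
            (v ^ (p.1 + 1) * u ^ p.2) := by
      intro p _
      simp only [hF, Algebra.smul_def, map_mul, map_pow]
      ring
    rw [sum_congr rfl hterm, sum_add_distrib, hlow, add_assoc, ← sum_add_distrib]
    congr 1
    · simp [hF, qB_zero_right hQ]
    · refine sum_congr rfl fun p _ => ?_
      simp only [hF, qB_succ_succ hQ, triangle_succ, pow_add, ← add_smul]
      congr 1
      ring

lemma prod_pow_sub_eq_sum (hQ : 1 < Q) (k : ℕ) (y : ℝ) :
    ∏ j ∈ Icc 1 k, (Q ^ j - y) =
      ∑ p ∈ antidiagonal k, Q ^ (p.1 * (p.1 + 1) / 2) * qB Q k p.1 * (-y) ^ p.2 := by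
  simpa [sub_eq_neg_add] using prod_add_pow_smul_eq_sum hQ (-y) (1 : ℝ) k

section Series

open PowerSeries

noncomputable def invQPochSeries (Q c : ℝ) (k : ℕ) : ℝ⟦X⟧ :=
  PowerSeries.mk fun ℓ => (-c) ^ ℓ * qB Q (k + ℓ) k

lemma one_add_smul_X_mul_invQPochSeries_succ (hQ : 1 < Q) (c : ℝ) (k : ℕ) :
    (1 + (c * Q ^ (k + 1)) • X) * invQPochSeries Q c (k + 1) = invQPochSeries Q c k := by
  ext (_ | n)
  · simp [invQPochSeries, qB_self hQ]
  · simp only [invQPochSeries, add_mul, one_mul, smul_mul_assoc, map_add, coeff_smul,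
      coeff_succ_X_mul, coeff_mk, smul_eq_mul]
    rw [show k + 1 + (n + 1) = k + n + 1 + 1 by omega, qB_succ_succ hQ,
      show k + 1 + n = k + n + 1 by omega, show k + (n + 1) = k + n + 1 by omega]
    ring

lemma prod_mul_invQPochSeries (hQ : 1 < Q) (c : ℝ) (k : ℕ) :
    (1 + c • X) * (∏ j ∈ Icc 1 k, (1 + (c * Q ^ j) • X)) * invQPochSeries Q c k = 1 := by
  induction k with
  | zero =>
    simpa [invQPochSeries, qB_zero_right hQ, mul_comm] using mk_pow_mul_one_add_smul_X c
  | succ k ih =>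
    rw [prod_Icc_succ_top (by omega), mul_assoc, mul_assoc, one_add_smul_X_mul_invQPochSeries_succ hQ,
      ← mul_assoc, ih]

noncomputable def qBinomProdSeries (Q : ℝ) (k : ℕ) : ℝ⟦X⟧ :=
  PowerSeries.mk fun t => Q ^ (t * (t + 1) / 2) * qB Q k t

lemma prod_one_add_pow_smul_X (hQ : 1 < Q) (k : ℕ) :
    ∏ j ∈ Icc 1 k, (1 + Q ^ j • X) = qBinomProdSeries Q k := by
  ext m
  rw [prod_add_pow_smul_eq_sum hQ, map_sum, Nat.sum_antidiagonal_eq_sum_range_succ_mk]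
  simp only [one_pow, mul_one, coeff_smul, coeff_X_pow, smul_eq_mul, mul_ite, mul_one, mul_zero,
    sum_ite_eq, mem_range, qBinomProdSeries, coeff_mk]
  split_ifs with h
  · rfl
  · rw [qB_of_lt Q (by omega), mul_zero]

lemma qBinomProdSeries_mul (hQ : 1 < Q) (k : ℕ) :
    qBinomProdSeries Q k * (PowerSeries.mk fun ℓ => ((-Q) ^ ℓ - (-1) ^ ℓ) * qB Q (k + ℓ) k) =
      PowerSeries.mk fun m => (-Q ^ (k + 1)) ^ m - (-1) ^ m := by
  have h1 : qBinomProdSeries Q k * invQPochSeries Q 1 k = PowerSeries.mk fun n => (-1) ^ n := by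
    apply eq_mk_pow_of_mul_one_add_smul_X
    have h := prod_mul_invQPochSeries hQ 1 k
    simp only [one_mul, prod_one_add_pow_smul_X hQ] at h
    linear_combination h
  have h2 : qBinomProdSeries Q k * invQPochSeries Q Q k =
      PowerSeries.mk fun n => (-Q ^ (k + 1)) ^ n := by
    apply eq_mk_pow_of_mul_one_add_smul_X
    have hshift : (1 + Q • X) * ∏ j ∈ Icc 1 k, (1 + (Q * Q ^ j) • X) =
        qBinomProdSeries Q k * (1 + Q ^ (k + 1) • X) := by
      rw [← prod_one_add_pow_smul_X hQ, ← prod_Icc_succ_top (by omega), prod_Icc_succ_eq_mul_prod,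
        pow_one]
      simp only [pow_succ']
    have h := prod_mul_invQPochSeries hQ Q k
    rw [hshift] at h
    linear_combination h
  have hG : (PowerSeries.mk fun ℓ => ((-Q) ^ ℓ - (-1) ^ ℓ) * qB Q (k + ℓ) k) =
      invQPochSeries Q Q k - invQPochSeries Q 1 k := by
    ext ℓ
    simp [invQPochSeries, sub_mul]
  rw [hG, mul_sub, h1, h2]
  ext m
  simp

lemma Ypoly_eq_coeff (k ℓ : ℕ) (x : ℝ) :
    Ypoly Q k ℓ x = coeff (k - ℓ) (rescale x (qBinomProdSeries Q k) * qBinomProdSeries Q k) := by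
  rw [coeff_mul, Nat.sum_antidiagonal_eq_sum_range_succ
    (fun i j => coeff i (rescale x (qBinomProdSeries Q k)) * coeff j (qBinomProdSeries Q k))]
  refine sum_congr rfl fun r _ => ?_
  simp only [coeff_rescale, qBinomProdSeries, coeff_mk, pow_add]
  ring

lemma sum_mul_Ypoly (hQ : 1 < Q) (k : ℕ) (x : ℝ) :
    ∑ ℓ ∈ Icc 1 k, (-1) ^ (ℓ - 1) * (qP Q (ℓ + k) / (qP Q k * qP Q (ℓ - 1))) * x ^ ℓ * Ypoly Q k ℓ x
      = ∏ j ∈ Icc 1 k, (Q ^ j - Q ^ (k + 1) * x) - Dpoly Q k x := by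
  set S := qBinomProdSeries Q k
  set G := PowerSeries.mk fun ℓ => ((-Q) ^ ℓ - (-1) ^ ℓ) * qB Q (k + ℓ) k
  have hcoef : ∀ ℓ ∈ Icc 1 k,
      (-1) ^ (ℓ - 1) * (qP Q (ℓ + k) / (qP Q k * qP Q (ℓ - 1))) = coeff ℓ G := by
    intro ℓ hℓ
    obtain ⟨l, rfl⟩ : ∃ l, ℓ = l + 1 := ⟨ℓ - 1, by simp at hℓ; omega⟩
    rw [Nat.add_sub_cancel, qP_div_eq_mul_qB hQ, coeff_mk, neg_pow Q]
    ring
  calc _ = ∑ ℓ ∈ range (k + 1), coeff ℓ (rescale x G) * coeff (k - ℓ) (rescale x S * S) := by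
        rw [range_eq_Ico, sum_eq_sum_Ico_succ_bot (by omega), zero_add, Ico_add_one_right_eq_Icc]
        have h0 : coeff 0 (rescale x G) = 0 := by simp [G]
        rw [h0, zero_mul, zero_add]
        refine sum_congr rfl fun ℓ hℓ => ?_
        rw [hcoef ℓ hℓ, Ypoly_eq_coeff, coeff_rescale]
        ring
    _ = coeff k (rescale x G * (rescale x S * S)) := by
        rw [coeff_mul, Nat.sum_antidiagonal_eq_sum_range_succ
          (fun i j => coeff i (rescale x G) * coeff j (rescale x S * S))]
    _ = coeff k (S * rescale x (S * G)) := by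
        rw [map_mul (rescale x)]
        congr 1
        ring
    _ = ∑ p ∈ antidiagonal k, coeff p.1 S * ((-(Q ^ (k + 1) * x)) ^ p.2 - (-x) ^ p.2) := by
        rw [qBinomProdSeries_mul hQ, rescale_mk, coeff_mul]
        refine sum_congr rfl fun p _ => ?_
        rw [coeff_mk]
        ring
    _ = _ := by
        rw [Dpoly, prod_pow_sub_eq_sum hQ, prod_pow_sub_eq_sum hQ, ← sum_sub_distrib]
        refine sum_congr rfl fun p _ => ?_
        simp only [S, qBinomProdSeries, coeff_mk]
        ring

end Series

lemma one_sub_pow_mul_div_one_sub_zpow_neg_mul (hQ : Q ≠ 0) {x : ℝ} {j k : ℕ} (hjk : j ≤ k + 1)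
    (hx : Q ^ j - x ≠ 0) :
    (1 - Q ^ (k + 1 - j) * x) / (1 - Q ^ (-(j : ℤ)) * x) = (Q ^ j - Q ^ (k + 1) * x) / (Q ^ j - x) := by
  have hQj : Q ^ j ≠ 0 := pow_ne_zero j hQ
  rw [zpow_neg, zpow_natCast, show 1 - (Q ^ j)⁻¹ * x = (Q ^ j - x) / Q ^ j by field_simp,
    div_div_eq_mul_div, show Q ^ (k + 1) = Q ^ j * Q ^ (k + 1 - j) by rw [← pow_add]; congr 1; omega]
  ring

lemma prod_one_sub_zpow_div (hQ : Q ≠ 0) (k : ℕ) {x : ℝ} (hx : ∀ j ∈ Icc 1 k, x ≠ Q ^ j) :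
    ∏ j ∈ Icc 1 k, (1 - Q ^ (j : ℤ) * x) / (1 - Q ^ (-(j : ℤ)) * x) =
      (∏ j ∈ Icc 1 k, (Q ^ j - Q ^ (k + 1) * x)) / Dpoly Q k x := by
  calc _ = (∏ j ∈ Icc 1 k, (1 - Q ^ (k + 1 - j) * x)) / ∏ j ∈ Icc 1 k, (1 - Q ^ (-(j : ℤ)) * x) := by
        simp only [prod_div_distrib, zpow_natCast, prod_Icc_reflect (fun j => 1 - Q ^ j * x)]
    _ = _ := by
        rw [← prod_div_distrib, Dpoly, ← prod_div_distrib]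
        refine prod_congr rfl fun j hj => ?_
        exact one_sub_pow_mul_div_one_sub_zpow_neg_mul hQ (by simp at hj; omega)
          (sub_ne_zero.mpr (hx j hj).symm)

end

/-- Telescoping identity: `∑_{ℓ≥1} B_ℓ(x) = -1 + ∏_{j=1}^k (1 - Q^j x)/(1 - Q^{-j} x)`
(the sum has only the terms `1 ≤ ℓ ≤ k`). -/
theorem stmt16 (Q : ℝ) (hQ : 1 < Q) (k : ℕ) (x : ℝ)
    (hx : ∀ j ∈ Finset.Icc 1 k, x ≠ Q ^ j) :
    ∑ ℓ ∈ Finset.Icc 1 k, Bfun Q k ℓ x =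
      -1 + ∏ j ∈ Finset.Icc 1 k, (1 - Q ^ (j : ℤ) * x) / (1 - Q ^ (-(j : ℤ)) * x) := by
  have hD : Dpoly Q k x ≠ 0 := prod_ne_zero_iff.mpr fun j hj => sub_ne_zero.mpr (hx j hj).symm
  have hB : ∑ ℓ ∈ Icc 1 k, Bfun Q k ℓ x = (∑ ℓ ∈ Icc 1 k,
      (-1) ^ (ℓ - 1) * (qP Q (ℓ + k) / (qP Q k * qP Q (ℓ - 1))) * x ^ ℓ * Ypoly Q k ℓ x) /
        Dpoly Q k x := by
    rw [sum_div]
    exact sum_congr rfl fun ℓ hℓ => if_pos (mem_Icc.mp hℓ).2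
  rw [hB, sum_mul_Ypoly hQ, prod_one_sub_zpow_div (by positivity) k hx]
  field_simp
  ring
end
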